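/- For every W-logic WL among the fourteen systems, the canonical model for WL is a constructive neighbourhood model for WL; in particular its valuation is hereditary, and it satisfies condition (C) if WL contains C_□ and K_◇, condition (N) if WL contains N_□, condition (D) if WL contains D, condition (P) if WL contains P_◇, and condition (T) if WL contains T_□ and T_◇. -/

import Mathlib

set_option autoImplicit false

/-- Formulas of the propositional modal language:
`A ::= p | ⊥ | A∧A | A∨A | A→A | □A | ◇A`. -/
inductive Formula : Type
  | var : ℕ → Formula
  | bot : Formula
  | and : Formula → Formula → Formula
  | or : Formula → Formula → Formula
  | imp : Formula → Formula → Formula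
  | box : Formula → Formula
  | dia : Formula → Formula
  deriving DecidableEq

/-- `¬A := A → ⊥`. -/
def Formula.neg (A : Formula) : Formula := A.imp Formula.bot

/-- `⊤ := ⊥ → ⊥`. -/
def Formula.top : Formula := Formula.bot.imp Formula.bot

/-- A specification of which additional modal axioms a logic has:
`N` (□⊤ / N-condition), `C` (C_□ together with K_◇ in W-logics),
`P` (P_□ classically / P_◇ in W-logics), `D` (□A→◇A), `T` (T_□, and T_◇ in W-logics). -/
structure LogicSpec where
  hasN : Bool := false
  hasC : Bool := false
  hasP : Bool := false
  hasD : Bool := false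
  hasT : Bool := false

/-- The names of the fourteen systems. -/
inductive LName : Type
  | M | MN | MC | K | MP | MNP | MD | MND | MCD | KD | MT | MNT | MCT | KT

/-- The axiom flags of the fourteen classical modal logics. -/
def cSpec : LName → LogicSpec
  | .M   => {}
  | .MN  => { hasN := true }
  | .MC  => { hasC := true }
  | .K   => { hasN := true, hasC := true }
  | .MP  => { hasP := true }
  | .MNP => { hasN := true, hasP := true }
  | .MD  => { hasD := true }
  | .MND => { hasN := true, hasD := true }
  | .MCD => { hasC := true, hasD := true }
  | .KD  => { hasN := true, hasC := true, hasD := true }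
  | .MT  => { hasT := true }
  | .MNT => { hasN := true, hasT := true }
  | .MCT => { hasC := true, hasT := true }
  | .KT  => { hasN := true, hasC := true, hasT := true }

/-- The axiom flags of the fourteen W-logics (WMD and WMCD include the axiom P_◇ explicitly). -/
def wSpec : LName → LogicSpec
  | .MD  => { hasP := true, hasD := true }
  | .MCD => { hasC := true, hasP := true, hasD := true }
  | n    => cSpec n

/-- Hilbert-style provability in the W-logic determined by the flags `S`:
intuitionistic propositional logic plus dual∧, the monotonicity rules M_□ and M_◇,
and, according to the flags, N_□, C_□ together with K_◇, P_◇, D, T_□ together with T_◇. -/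
inductive WProof (S : LogicSpec) : Formula → Prop
  | ax1 (A B : Formula) : WProof S (A.imp (B.imp A))
  | ax2 (A B C : Formula) : WProof S ((A.imp (B.imp C)).imp ((A.imp B).imp (A.imp C)))
  | andI (A B : Formula) : WProof S (A.imp (B.imp (A.and B)))
  | andE1 (A B : Formula) : WProof S ((A.and B).imp A)
  | andE2 (A B : Formula) : WProof S ((A.and B).imp B)
  | orI1 (A B : Formula) : WProof S (A.imp (A.or B))
  | orI2 (A B : Formula) : WProof S (B.imp (A.or B))
  | orE (A B C : Formula) : WProof S ((A.imp C).imp ((B.imp C).imp ((A.or B).imp C)))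
  | botE (A : Formula) : WProof S (Formula.bot.imp A)
  | mp {A B : Formula} : WProof S (A.imp B) → WProof S A → WProof S B
  | dualAnd (A : Formula) : WProof S (((Formula.box A).and (Formula.dia A.neg)).neg)
  | monBox {A B : Formula} : WProof S (A.imp B) → WProof S ((Formula.box A).imp (Formula.box B))
  | monDia {A B : Formula} : WProof S (A.imp B) → WProof S ((Formula.dia A).imp (Formula.dia B))
  | nBox : S.hasN = true → WProof S (Formula.box Formula.top)
  | cBox (A B : Formula) : S.hasC = true →
      WProof S (((Formula.box A).and (Formula.box B)).imp (Formula.box (A.and B)))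
  | kDia (A B : Formula) : S.hasC = true →
      WProof S ((Formula.box (A.imp B)).imp ((Formula.dia A).imp (Formula.dia B)))
  | pDia : S.hasP = true → WProof S (Formula.dia Formula.top)
  | dAx (A : Formula) : S.hasD = true → WProof S ((Formula.box A).imp (Formula.dia A))
  | tBox (A : Formula) : S.hasT = true → WProof S ((Formula.box A).imp A)
  | tDia (A : Formula) : S.hasT = true → WProof S (A.imp (Formula.dia A))

/-- Conjunction of a list of formulas (empty conjunction is ⊤). -/
def conjList : List Formula → Formula
  | [] => Formula.top
  | [A] => A
  | A :: B :: l => A.and (conjList (B :: l))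

/-- Disjunction of a list of formulas (empty disjunction is ⊥). -/
def disjList : List Formula → Formula
  | [] => Formula.bot
  | [A] => A
  | A :: B :: l => A.or (disjList (B :: l))

/-- `⋀Γ` for a finite multiset `Γ` (empty `Γ` is read as ⊤). -/
noncomputable def conjM (Γ : Multiset Formula) : Formula := conjList Γ.toList

/-- `⋁Δ` for a finite multiset `Δ` (empty `Δ` is read as ⊥). -/
noncomputable def disjM (Δ : Multiset Formula) : Formula := disjList Δ.toList

/-- `A` is deducible in the W-logic `S` from the set of formulas `Sg`:
there is a finite subset `{B₁,…,Bₙ} ⊆ Sg` with `⊢ B₁∧…∧Bₙ → A`. -/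
def Deduces (S : LogicSpec) (Sg : Set Formula) (A : Formula) : Prop :=
  ∃ L : List Formula, (∀ B ∈ L, B ∈ Sg) ∧ WProof S ((conjList L).imp A)

/-- A WL-prime set: consistent, closed under deduction, and with the disjunction property. -/
structure IsPrime (S : LogicSpec) (Sg : Set Formula) : Prop where
  consistent : ¬ Deduces S Sg Formula.bot
  closed : ∀ A : Formula, Deduces S Sg A → A ∈ Sg
  disj : ∀ A B : Formula, (A.or B) ∈ Sg → A ∈ Sg ∨ B ∈ Sg

/-- A WL-segment `(Sg, C)`: `Sg` is WL-prime and `C` is a class of sets of WL-prime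
sets satisfying the box and diamond conditions, together with the extra conditions
for logics containing C_□ & K_◇, D, or T_□ & T_◇. -/
structure IsSegment (S : LogicSpec) (Sg : Set Formula) (C : Set (Set (Set Formula))) : Prop where
  prime : IsPrime S Sg
  allPrime : ∀ U ∈ C, ∀ Pr ∈ U, IsPrime S Pr
  boxCond : ∀ A : Formula, Formula.box A ∈ Sg → ∃ U ∈ C, ∀ Pr ∈ U, A ∈ Pr
  diaCond : ∀ A : Formula, Formula.dia A ∈ Sg → ∀ U ∈ C, ∃ Pr ∈ U, A ∈ Pr
  cCond : S.hasC = true → ∀ U ∈ C, ∀ U' ∈ C, U ∩ U' ∈ C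
  dCond : S.hasD = true → ∀ U ∈ C, ∀ U' ∈ C, (U ∩ U').Nonempty
  tCond : S.hasT = true → ∀ U ∈ C, Sg ∈ U

/-- A constructive neighbourhood model (CNM): a preorder `le` of intuitionistic
accessibility, a neighbourhood function `N`, and a hereditary valuation `V`. -/
structure CNM (W : Type) where
  le : W → W → Prop
  le_refl : ∀ w, le w w
  le_trans : ∀ u v w, le u v → le v w → le u w
  N : W → Set (Set W)
  V : ℕ → Set W
  hered : ∀ (p : ℕ) (u v : W), le u v → u ∈ V p → v ∈ V p

/-- Forcing in a constructive neighbourhood model: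
`w ⊩ B→C` iff for all `v ≥ w`, `v ⊩ B` implies `v ⊩ C`;
`w ⊩ □B` iff for all `v ≥ w` there is `α ∈ N(v)` with `u ⊩ B` for all `u ∈ α`;
`w ⊩ ◇B` iff for all `v ≥ w` and all `α ∈ N(v)` there is `u ∈ α` with `u ⊩ B`. -/
def CNM.force {W : Type} (M : CNM W) : Formula → W → Prop
  | Formula.var p, w => w ∈ M.V p
  | Formula.bot, _ => False
  | Formula.and A B, w => M.force A w ∧ M.force B w
  | Formula.or A B, w => M.force A w ∨ M.force B w
  | Formula.imp A B, w => ∀ v, M.le w v → M.force A v → M.force B v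
  | Formula.box A, w => ∀ v, M.le w v → ∃ α ∈ M.N v, ∀ u ∈ α, M.force A u
  | Formula.dia A, w => ∀ v, M.le w v → ∀ α ∈ M.N v, ∃ u ∈ α, M.force A u

/-- `M` is a constructive neighbourhood model for the W-logic with flags `S`: it
satisfies the condition (C), (N), (T), (D), (P) corresponding to each modal axiom
of the logic among C_□ (with K_◇), N_□, T_□ (with T_◇), D, P_◇. -/
def CNM.forLogic {W : Type} (S : LogicSpec) (M : CNM W) : Prop :=
  (S.hasC = true → ∀ w, ∀ α ∈ M.N w, ∀ β ∈ M.N w, α ∩ β ∈ M.N w) ∧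
  (S.hasN = true → ∀ w, M.N w ≠ ∅) ∧
  (S.hasT = true → ∀ w, ∀ α ∈ M.N w, w ∈ α) ∧
  (S.hasD = true → ∀ w, ∀ α ∈ M.N w, ∀ β ∈ M.N w, (α ∩ β).Nonempty) ∧
  (S.hasP = true → ∀ w, ∅ ∉ M.N w)

/-- The worlds of the canonical model for the W-logic `S`: the WL-segments. -/
def Seg (S : LogicSpec) : Type :=
  { x : Set Formula × Set (Set (Set Formula)) // IsSegment S x.1 x.2 }

/-- The canonical model for the W-logic `S`: worlds are WL-segments,
`(Σ,C) ≤ (Σ',C')` iff `Σ ⊆ Σ'`, the neighbourhoods of `(Σ,C)` are the sets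
`α_U = {(Σ',C') : Σ' ∈ U}` for `U ∈ C`, and `(Σ,C) ∈ V(p)` iff `p ∈ Σ`. -/
def canonical (S : LogicSpec) : CNM (Seg S) where
  le x y := x.1.1 ⊆ y.1.1
  le_refl _ := subset_rfl
  le_trans _ _ _ h1 h2 := fun _ ha => h2 (h1 ha)
  N x := { α | ∃ U ∈ x.1.2, α = { y : Seg S | y.1.1 ∈ U } }
  V p := { x : Seg S | Formula.var p ∈ x.1.1 }
  hered _ _ _ hle h := hle h

/-! The conditions (C), (N) and (T) are read off directly from the defining clauses of a
segment. The real content lies in (D) and (P): there one obtains a prime set `Φ` lying in a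
neighbourhood and must exhibit a *segment* `(Φ, C)`. The canonical choice is
`boxClass Φ = {⟦A⟧ : □A ∈ Φ}` with `⟦A⟧` the prime sets containing `A`. Its diamond and (D) clauses
hold because `A ∧ B` is consistent whenever `□A, ◇B ∈ Φ` (or `□A, □B ∈ Φ` under D) — otherwise
monotonicity yields `◇¬A` (resp. `◇¬B`) next to `□A` (resp. `□B`), refuted by dual∧ — and a
consistent pair extends to a prime set by Lindenbaum's lemma. -/

namespace WProof

variable {S : LogicSpec} {A B C : Formula} {L : List Formula}

lemma imp_self (A : Formula) : WProof S (A.imp A) :=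
  mp (mp (ax2 A (A.imp A) A) (ax1 A (A.imp A))) (ax1 A A)

lemma imp_intro (h : WProof S B) : WProof S (A.imp B) :=
  mp (ax1 B A) h

lemma imp_trans (h₁ : WProof S (A.imp B)) (h₂ : WProof S (B.imp C)) : WProof S (A.imp C) :=
  mp (mp (ax2 A B C) (imp_intro h₂)) h₁

lemma top : WProof S Formula.top := imp_self Formula.bot

lemma imp_comm (h : WProof S (A.imp (B.imp C))) : WProof S (B.imp (A.imp C)) :=
  imp_trans (ax1 B A) (mp (ax2 A B C) h)

lemma curry (h : WProof S ((A.and B).imp C)) : WProof S (A.imp (B.imp C)) :=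
  imp_trans (andI A B) (mp (ax2 B (A.and B) C) (imp_intro h))

lemma uncurry (h : WProof S (A.imp (B.imp C))) : WProof S ((A.and B).imp C) :=
  mp (mp (ax2 (A.and B) B C) (imp_trans (andE1 A B) h)) (andE2 A B)

lemma imp_and (h₁ : WProof S (C.imp A)) (h₂ : WProof S (C.imp B)) :
    WProof S (C.imp (A.and B)) :=
  mp (mp (ax2 C B (A.and B)) (imp_trans h₁ (andI A B))) h₂

lemma conjList_imp_of_mem {L : List Formula} (h : B ∈ L) : WProof S ((conjList L).imp B) := by
  match L, h with
  | [_], .head _ => exact imp_self _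
  | _ :: _ :: _, .head _ => exact andE1 _ _
  | _ :: _ :: _, .tail _ h => exact imp_trans (andE2 _ _) (conjList_imp_of_mem h)

lemma imp_conjList {L : List Formula} (h : ∀ B ∈ L, WProof S (C.imp B)) :
    WProof S (C.imp (conjList L)) := by
  match L with
  | [] => exact imp_intro top
  | [_] => exact h _ List.mem_cons_self
  | _ :: _ :: _ =>
    exact imp_and (h _ List.mem_cons_self) (imp_conjList fun B hB => h B (.tail _ hB))

lemma conjList_imp_conjList {L₁ L₂ : List Formula} (h : L₂ ⊆ L₁) :
    WProof S ((conjList L₁).imp (conjList L₂)) :=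
  imp_conjList fun _ hB => conjList_imp_of_mem (h hB)

lemma conjList_cons_imp (h : WProof S ((conjList (A :: L)).imp B)) :
    WProof S ((conjList L).imp (A.imp B)) := by
  match L with
  | [] => exact imp_intro h
  | _ :: _ => exact imp_comm (curry h)

end WProof

namespace Deduces

variable {S : LogicSpec} {Γ : Set Formula} {A B : Formula}

lemma of_mem (h : A ∈ Γ) : Deduces S Γ A :=
  ⟨[A], by simpa using h, WProof.imp_self A⟩

lemma of_wproof (h : WProof S A) : Deduces S Γ A :=
  ⟨[], by simp, WProof.imp_intro h⟩

lemma mp_wproof (h : WProof S (A.imp B)) : Deduces S Γ A → Deduces S Γ B :=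
  fun ⟨L, hL, hp⟩ => ⟨L, hL, WProof.imp_trans hp h⟩

lemma and (hA : Deduces S Γ A) (hB : Deduces S Γ B) : Deduces S Γ (A.and B) := by
  obtain ⟨L₁, hL₁, hp₁⟩ := hA
  obtain ⟨L₂, hL₂, hp₂⟩ := hB
  refine ⟨L₁ ++ L₂, fun C hC => (List.mem_append.1 hC).elim (hL₁ C) (hL₂ C), ?_⟩
  exact WProof.imp_and
    (WProof.imp_trans (WProof.conjList_imp_conjList (List.subset_append_left _ _)) hp₁)
    (WProof.imp_trans (WProof.conjList_imp_conjList (List.subset_append_right _ _)) hp₂)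

lemma mp (h : Deduces S Γ (A.imp B)) (hA : Deduces S Γ A) : Deduces S Γ B :=
  mp_wproof (WProof.uncurry (WProof.imp_self (A.imp B))) (h.and hA)

lemma imp_of_insert (h : Deduces S (insert A Γ) B) : Deduces S Γ (A.imp B) := by
  obtain ⟨L, hL, hp⟩ := h
  refine ⟨L.filter (· ≠ A), fun C hC => ?_, ?_⟩
  · obtain ⟨hCL, hCA⟩ := List.mem_filter.1 hC
    exact (hL C hCL).resolve_left (by simpa using hCA)
  · refine WProof.conjList_cons_imp (WProof.imp_trans (WProof.conjList_imp_conjList ?_) hp)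
    intro C hC
    by_cases hCA : C = A <;> simp [hCA, hC]

lemma sUnion_of_isChain {c : Set (Set Formula)} (hc : IsChain (· ⊆ ·) c) (hne : c.Nonempty)
    (h : Deduces S (⋃₀ c) A) : ∃ Δ ∈ c, Deduces S Δ A := by
  obtain ⟨L, hL, hp⟩ := h
  obtain ⟨Δ, hΔ, hLΔ⟩ :=
    hc.directedOn.exists_mem_subset_of_finite_of_subset_sUnion hne L.finite_toSet hL
  exact ⟨Δ, hΔ, L, hLΔ, hp⟩

end Deduces

namespace IsPrime

variable {S : LogicSpec} {Φ : Set Formula} {A B : Formula}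

lemma mem_of_wproof (hΦ : IsPrime S Φ) (h : WProof S A) : A ∈ Φ :=
  hΦ.closed A (.of_wproof h)

lemma mem_of_wproof_imp (hΦ : IsPrime S Φ) (h : WProof S (A.imp B)) (hA : A ∈ Φ) : B ∈ Φ :=
  hΦ.closed B (.mp_wproof h (.of_mem hA))

lemma and_mem (hΦ : IsPrime S Φ) (hA : A ∈ Φ) (hB : B ∈ Φ) : A.and B ∈ Φ :=
  hΦ.closed _ ((Deduces.of_mem hA).and (.of_mem hB))

lemma and_mem_iff (hΦ : IsPrime S Φ) : A.and B ∈ Φ ↔ A ∈ Φ ∧ B ∈ Φ :=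
  ⟨fun h => ⟨hΦ.mem_of_wproof_imp (.andE1 A B) h, hΦ.mem_of_wproof_imp (.andE2 A B) h⟩,
    fun h => hΦ.and_mem h.1 h.2⟩

lemma not_box_and_dia_neg (hΦ : IsPrime S Φ) (hbox : Formula.box A ∈ Φ)
    (hdia : Formula.dia A.neg ∈ Φ) : False :=
  hΦ.consistent (.mp_wproof (.dualAnd A) ((Deduces.of_mem hbox).and (.of_mem hdia)))

end IsPrime

section Lindenbaum

variable {S : LogicSpec}

lemma IsPrime.of_maximal {Φ : Set Formula} (h : Maximal (fun Δ => ¬ Deduces S Δ Formula.bot) Φ) :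
    IsPrime S Φ := by
  have refutes : ∀ A, A ∉ Φ → Deduces S Φ A.neg := fun A hA =>
    Deduces.imp_of_insert (not_not.1 fun hcon => hA (h.mem_of_prop_insert hcon))
  refine ⟨h.prop, fun A hA => ?_, fun A B hAB => ?_⟩
  · by_contra hAΦ
    exact h.prop ((refutes A hAΦ).mp hA)
  · by_contra! hnot
    have hcases : Deduces S Φ (A.neg.imp (B.neg.imp (A.or B).neg)) :=
      .of_wproof (.orE A B Formula.bot)
    exact h.prop (((hcases.mp (refutes A hnot.1)).mp (refutes B hnot.2)).mp (.of_mem hAB))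

lemma exists_isPrime_superset {Γ : Set Formula} (h : ¬ Deduces S Γ Formula.bot) :
    ∃ Φ, IsPrime S Φ ∧ Γ ⊆ Φ := by
  obtain ⟨Φ, hΓΦ, hmax⟩ := zorn_subset_nonempty {Δ | ¬ Deduces S Δ Formula.bot}
    (fun c hc hchain hne => ⟨⋃₀ c, fun hbot => by
      obtain ⟨Δ, hΔ, hΔbot⟩ := Deduces.sUnion_of_isChain hchain hne hbot
      exact hc hΔ hΔbot, fun _ => Set.subset_sUnion_of_mem⟩) Γ h
  exact ⟨Φ, .of_maximal hmax, hΓΦ⟩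

lemma exists_isPrime_of_not_wproof {A B : Formula} (h : ¬ WProof S ((A.and B).imp Formula.bot)) :
    ∃ Φ, IsPrime S Φ ∧ A ∈ Φ ∧ B ∈ Φ := by
  have hcon : ¬ Deduces S {A, B} Formula.bot := by
    rintro ⟨L, hL, hp⟩
    refine h (WProof.imp_trans (WProof.conjList_imp_conjList (L₁ := [A, B]) fun C hC => ?_) hp)
    rcases hL C hC with rfl | rfl <;> simp
  obtain ⟨Φ, hΦ, hsub⟩ := exists_isPrime_superset hcon
  exact ⟨Φ, hΦ, hsub (by simp), hsub (by simp)⟩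

end Lindenbaum

section Segment

variable {S : LogicSpec} {Φ : Set Formula}

def truthSet (S : LogicSpec) (A : Formula) : Set (Set Formula) := {Φ | IsPrime S Φ ∧ A ∈ Φ}

def boxClass (S : LogicSpec) (Φ : Set Formula) : Set (Set (Set Formula)) :=
  {U | ∃ A, Formula.box A ∈ Φ ∧ U = truthSet S A}

lemma truthSet_inter (A B : Formula) : truthSet S A ∩ truthSet S B = truthSet S (A.and B) := by
  ext Φ
  simp only [truthSet, Set.mem_inter_iff, Set.mem_ofPred_eq]
  constructor
  · rintro ⟨⟨hΦ, hA⟩, -, hB⟩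
    exact ⟨hΦ, hΦ.and_mem hA hB⟩
  · rintro ⟨hΦ, hAB⟩
    exact ⟨⟨hΦ, (hΦ.and_mem_iff.1 hAB).1⟩, hΦ, (hΦ.and_mem_iff.1 hAB).2⟩

lemma truthSet_inter_nonempty_of_not_wproof {A B : Formula}
    (h : ¬ WProof S ((A.and B).imp Formula.bot)) :
    (truthSet S A ∩ truthSet S B).Nonempty := by
  obtain ⟨Φ, hΦ, hA, hB⟩ := exists_isPrime_of_not_wproof h
  exact ⟨Φ, ⟨hΦ, hA⟩, hΦ, hB⟩

lemma IsPrime.truthSet_inter_nonempty_of_box_of_dia (hΦ : IsPrime S Φ) {A B : Formula}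
    (hA : Formula.box A ∈ Φ) (hB : Formula.dia B ∈ Φ) : (truthSet S A ∩ truthSet S B).Nonempty := by
  refine truthSet_inter_nonempty_of_not_wproof fun hAB => hΦ.not_box_and_dia_neg hA ?_
  exact hΦ.mem_of_wproof_imp (.monDia (WProof.imp_comm (WProof.curry hAB))) hB

lemma IsPrime.truthSet_inter_nonempty_of_box_of_box (hΦ : IsPrime S Φ) (hD : S.hasD = true)
    {A B : Formula} (hA : Formula.box A ∈ Φ) (hB : Formula.box B ∈ Φ) :
    (truthSet S A ∩ truthSet S B).Nonempty := by
  refine truthSet_inter_nonempty_of_not_wproof fun hAB => hΦ.not_box_and_dia_neg hB ?_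
  exact hΦ.mem_of_wproof_imp (WProof.imp_trans (.monBox (WProof.curry hAB)) (.dAx _ hD)) hA

lemma IsPrime.isSegment_boxClass (hΦ : IsPrime S Φ) : IsSegment S Φ (boxClass S Φ) where
  prime := hΦ
  allPrime := by
    rintro U ⟨A, -, rfl⟩ Φ' hΦ'
    exact hΦ'.1
  boxCond A hA := ⟨_, ⟨A, hA, rfl⟩, fun _ h => h.2⟩
  diaCond := by
    rintro B hB U ⟨A, hA, rfl⟩
    obtain ⟨Φ', hΦ'A, -, hΦ'B⟩ := hΦ.truthSet_inter_nonempty_of_box_of_dia hA hB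
    exact ⟨Φ', hΦ'A, hΦ'B⟩
  cCond := by
    rintro hC U ⟨A, hA, rfl⟩ U' ⟨B, hB, rfl⟩
    exact ⟨A.and B, hΦ.mem_of_wproof_imp (.cBox A B hC) (hΦ.and_mem hA hB),
      truthSet_inter A B⟩
  dCond := by
    rintro hD U ⟨A, hA, rfl⟩ U' ⟨B, hB, rfl⟩
    exact hΦ.truthSet_inter_nonempty_of_box_of_box hD hA hB
  tCond := by
    rintro hT U ⟨A, hA, rfl⟩
    exact ⟨hΦ, hΦ.mem_of_wproof_imp (.tBox A hT) hA⟩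

def IsPrime.toSeg (hΦ : IsPrime S Φ) : Seg S := ⟨(Φ, boxClass S Φ), hΦ.isSegment_boxClass⟩

end Segment

section Canonical

variable {S : LogicSpec}

lemma canonical_N_inter_mem (hC : S.hasC = true) (w : Seg S) :
    ∀ α ∈ (canonical S).N w, ∀ β ∈ (canonical S).N w, α ∩ β ∈ (canonical S).N w := by
  rintro _ ⟨U, hU, rfl⟩ _ ⟨U', hU', rfl⟩
  exact ⟨U ∩ U', w.2.cCond hC U hU U' hU', rfl⟩

lemma canonical_N_ne_empty (hN : S.hasN = true) (w : Seg S) : (canonical S).N w ≠ ∅ := by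
  obtain ⟨U, hU, -⟩ := w.2.boxCond _ (w.2.prime.mem_of_wproof (.nBox hN))
  exact Set.nonempty_iff_ne_empty.1 ⟨_, U, hU, rfl⟩

lemma canonical_mem_of_mem_N (hT : S.hasT = true) (w : Seg S) :
    ∀ α ∈ (canonical S).N w, w ∈ α := by
  rintro _ ⟨U, hU, rfl⟩
  exact w.2.tCond hT U hU

lemma canonical_N_inter_nonempty (hD : S.hasD = true) (w : Seg S) :
    ∀ α ∈ (canonical S).N w, ∀ β ∈ (canonical S).N w, (α ∩ β).Nonempty := by
  rintro _ ⟨U, hU, rfl⟩ _ ⟨U', hU', rfl⟩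
  obtain ⟨Φ, hΦU, hΦU'⟩ := w.2.dCond hD U hU U' hU'
  exact ⟨(w.2.allPrime U hU Φ hΦU).toSeg, hΦU, hΦU'⟩

lemma canonical_empty_notMem_N (hP : S.hasP = true) (w : Seg S) :
    ∅ ∉ (canonical S).N w := by
  rintro ⟨U, hU, hempty⟩
  obtain ⟨Φ, hΦU, -⟩ := w.2.diaCond _ (w.2.prime.mem_of_wproof (.pDia hP)) U hU
  exact Set.eq_empty_iff_forall_notMem.1 hempty.symm (w.2.allPrime U hU Φ hΦU).toSeg hΦU

theorem canonical_forLogic (S : LogicSpec) : (canonical S).forLogic S :=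
  ⟨canonical_N_inter_mem, canonical_N_ne_empty, canonical_mem_of_mem_N, canonical_N_inter_nonempty,
    canonical_empty_notMem_N⟩

end Canonical

/-- the canonical model for each of the fourteen W-logics is a
constructive neighbourhood model for that logic: its valuation is hereditary and it
satisfies (C) if the logic contains C_□ & K_◇, (N) if it contains N_□, (D) if it
contains D, (P) if it contains P_◇, and (T) if it contains T_□ & T_◇. -/
theorem statement17 (L : LName) :
    (∀ (p : ℕ) (u v : Seg (wSpec L)), (canonical (wSpec L)).le u v →
        u ∈ (canonical (wSpec L)).V p → v ∈ (canonical (wSpec L)).V p) ∧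
    (canonical (wSpec L)).forLogic (wSpec L) :=
  ⟨(canonical (wSpec L)).hered, canonical_forLogic (wSpec L)⟩
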